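/- For every n ∈ ℕ, with k = n(n−1)/2 + n, the group T*(n,ℝ) admits an essentially free orientation-preserving affine action on ℝ^k_lex. -/

import Mathlib

/-- `Fin n → R` with the lexicographic order in which the **last** coordinate is the most
significant: `x < y` iff `x ≠ y` and `x i < y i` at the largest index `i` where `x` and `y`
differ. -/
def LexPow (R : Type*) (n : ℕ) : Type _ := Fin n → R

namespace LexPow

variable {R : Type*} {n : ℕ}

/-- The identity bijection between `Fin n → R` and `LexPow R n`. -/
def of : (Fin n → R) ≃ LexPow R n := Equiv.refl _

instance : CoeFun (LexPow R n) (fun _ => Fin n → R) := ⟨fun x => x⟩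

instance [AddCommGroup R] : AddCommGroup (LexPow R n) :=
  inferInstanceAs (AddCommGroup (Fin n → R))

/-- The map reversing coordinates, into the Mathlib lexicographic order (in which the *first*
coordinate is most significant). -/
def toRevLex (x : LexPow R n) : Lex (Fin n → R) :=
  toLex (fun i : Fin n => of.symm x (Fin.rev i))

theorem toRevLex_injective : Function.Injective (toRevLex (R := R) (n := n)) := by
  intro a b hab
  refine of.symm.injective (funext fun i => ?_)
  have h := congrFun (congrArg ofLex hab) (Fin.rev i)
  simpa [toRevLex, Fin.rev_rev] using h

noncomputable instance [LinearOrder R] : LinearOrder (LexPow R n) :=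
  LinearOrder.lift' (toRevLex (R := R) (n := n)) toRevLex_injective

instance [AddCommGroup R] [LinearOrder R] [IsOrderedAddMonoid R] :
    IsOrderedAddMonoid (LexPow R n) where
  add_le_add_left := fun a b hab c => by
    show toRevLex (a + c) ≤ toRevLex (b + c)
    have h : toRevLex a ≤ toRevLex b := hab
    exact add_le_add_left h (toRevLex c)

end LexPow

/-- An orientation-preserving affine automorphism of a linearly ordered abelian group `Λ`:
an order-preserving bijection `g` of `Λ` admitting an order-preserving group automorphism
`dilation` (the dilation factor) with `g x - g y = dilation (x - y)` for all `x, y`. -/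
structure OPAffineAut (Λ : Type*) [AddCommGroup Λ] [LinearOrder Λ] [IsOrderedAddMonoid Λ] extends Λ ≃ Λ where
  strictMono' : StrictMono toEquiv
  dilation : Λ ≃+ Λ
  dilation_strictMono : StrictMono dilation
  affine : ∀ x y : Λ, toEquiv x - toEquiv y = dilation (x - y)

namespace OPAffineAut

variable {Λ : Type*} [AddCommGroup Λ] [LinearOrder Λ] [IsOrderedAddMonoid Λ]

instance : CoeFun (OPAffineAut Λ) (fun _ => Λ → Λ) := ⟨fun f => f.toEquiv⟩

theorem ext' {f g : OPAffineAut Λ} (h : ∀ x, f x = g x) : f = g := by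
  have he : f.toEquiv = g.toEquiv := Equiv.ext h
  have hd : f.dilation = g.dilation := AddEquiv.ext fun x => by
    have hf := f.affine x 0
    have hg := g.affine x 0
    rw [sub_zero] at hf hg
    rw [← hf, ← hg]
    show f x - f 0 = g x - g 0
    rw [h x, h 0]
  cases f; cases g
  cases he; cases hd
  rfl

instance : Group (OPAffineAut Λ) where
  one :=
    { toEquiv := Equiv.refl Λ
      strictMono' := strictMono_id
      dilation := AddEquiv.refl Λ
      dilation_strictMono := strictMono_id
      affine := fun _ _ => rfl }
  mul f g :=
    { toEquiv := g.toEquiv.trans f.toEquiv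
      strictMono' := f.strictMono'.comp g.strictMono'
      dilation := g.dilation.trans f.dilation
      dilation_strictMono := f.dilation_strictMono.comp g.dilation_strictMono
      affine := fun x y => by
        simp only [Equiv.trans_apply, AddEquiv.trans_apply]
        rw [f.affine, g.affine] }
  inv f :=
    { toEquiv := f.toEquiv.symm
      strictMono' := fun a b hab => f.strictMono'.lt_iff_lt.1 (by
        simpa only [Equiv.apply_symm_apply] using hab)
      dilation := f.dilation.symm
      dilation_strictMono := fun a b hab => f.dilation_strictMono.lt_iff_lt.1 (by
        simpa only [AddEquiv.apply_symm_apply] using hab)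
      affine := fun x y => f.dilation.injective (by
        rw [AddEquiv.apply_symm_apply, ← f.affine, Equiv.apply_symm_apply,
          Equiv.apply_symm_apply]) }
  mul_assoc f g h := ext' fun _ => rfl
  one_mul f := ext' fun _ => rfl
  mul_one f := ext' fun _ => rfl
  inv_mul_cancel f := ext' fun x => f.toEquiv.symm_apply_apply x

@[simp] theorem mul_apply (f g : OPAffineAut Λ) (x : Λ) : (f * g) x = f (g x) := rfl
@[simp] theorem one_apply (x : Λ) : (1 : OPAffineAut Λ) x = x := rfl
@[simp] theorem inv_apply (f : OPAffineAut Λ) (x : Λ) : f⁻¹ x = f.toEquiv.symm x := rfl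

/-- An affine automorphism is *hyperbolic* if it has no fixed point. -/
def Hyperbolic (f : OPAffineAut Λ) : Prop := ∀ x : Λ, f x ≠ x

/-- An affine automorphism is *rigid* if for `ε = ±1`, whenever `f^ε` moves some point up,
it moves every point up. -/
def Rigid (f : OPAffineAut Λ) : Prop :=
  ∀ ε : ℤ, ε = 1 ∨ ε = -1 → (∃ x : Λ, x < (f ^ ε) x) → ∀ y : Λ, y < (f ^ ε) y

end OPAffineAut

/-- An orientation-preserving affine action (a homomorphism into the group of
orientation-preserving affine automorphisms) is *free* if every nontrivial group element
acts without fixed points. -/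
def AffineActionFree {G Λ : Type*} [Group G] [AddCommGroup Λ] [LinearOrder Λ] [IsOrderedAddMonoid Λ]
    (ρ : G →* OPAffineAut Λ) : Prop :=
  ∀ g : G, g ≠ 1 → ∀ x : Λ, ρ g x ≠ x

/-- An orientation-preserving affine action is *essentially free* if every nontrivial group
element acts as a rigid hyperbolic affine automorphism. -/
def AffineActionEssentiallyFree {G Λ : Type*} [Group G] [AddCommGroup Λ] [LinearOrder Λ] [IsOrderedAddMonoid Λ]
    (ρ : G →* OPAffineAut Λ) : Prop :=
  ∀ g : G, g ≠ 1 → (ρ g).Rigid ∧ (ρ g).Hyperbolic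

/-- `G` admits an essentially free orientation-preserving affine action on `Λ`. -/
def HasEssentiallyFreeAffineAction (G : Type*) [Group G] (Λ : Type*)
    [AddCommGroup Λ] [LinearOrder Λ] [IsOrderedAddMonoid Λ] : Prop :=
  ∃ ρ : G →* OPAffineAut Λ, AffineActionEssentiallyFree ρ

section Matrices

variable {R : Type*} {n : ℕ}

theorem diag_mul_of_triangular [CommRing R] {A B : Matrix (Fin n) (Fin n) R}
    (hA : A.BlockTriangular id) (hB : B.BlockTriangular id) (i : Fin n) :
    (A * B) i i = A i i * B i i := by
  rw [Matrix.mul_apply]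
  apply Finset.sum_eq_single i
  · intro k _ hk
    rcases lt_or_gt_of_ne hk with h | h
    · rw [hA (show (id : Fin n → Fin n) k < id i from h), zero_mul]
    · rw [hB (show (id : Fin n → Fin n) i < id k from h), mul_zero]
  · intro h; exact absurd (Finset.mem_univ i) h

/-- The group `UT(n,R)` of upper triangular `n × n` matrices over `R` with all diagonal
entries equal to `1`, realised as a subgroup of the group of units of the matrix ring. -/
def UT (n : ℕ) (R : Type*) [CommRing R] : Subgroup (Matrix (Fin n) (Fin n) R)ˣ where
  carrier := {A | (∀ i j : Fin n, j < i → (A : Matrix (Fin n) (Fin n) R) i j = 0) ∧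
    ∀ i : Fin n, (A : Matrix (Fin n) (Fin n) R) i i = 1}
  one_mem' := by
    refine ⟨fun i j hij => ?_, fun i => ?_⟩
    · simp [Matrix.one_apply, (ne_of_lt hij).symm]
    · simp
  mul_mem' := by
    rintro A B ⟨hA1, hA2⟩ ⟨hB1, hB2⟩
    have hA : (A : Matrix (Fin n) (Fin n) R).BlockTriangular id := fun i j h => hA1 i j h
    have hB : (B : Matrix (Fin n) (Fin n) R).BlockTriangular id := fun i j h => hB1 i j h
    refine ⟨fun i j hij => ?_, fun i => ?_⟩
    · exact (hA.mul hB) (show (id : Fin n → Fin n) j < id i from hij)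
    · rw [Units.val_mul, diag_mul_of_triangular hA hB, hA2, hB2, one_mul]
  inv_mem' := by
    rintro A ⟨hA1, hA2⟩
    have hA : (A : Matrix (Fin n) (Fin n) R).BlockTriangular id := fun i j h => hA1 i j h
    haveI := A.invertible
    have hAinv : ((A : Matrix (Fin n) (Fin n) R)⁻¹).BlockTriangular id :=
      Matrix.blockTriangular_inv_of_blockTriangular hA
    have hcoe : ((A⁻¹ : (Matrix (Fin n) (Fin n) R)ˣ) : Matrix (Fin n) (Fin n) R)
        = (A : Matrix (Fin n) (Fin n) R)⁻¹ := Matrix.coe_units_inv A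
    refine ⟨fun i j hij => ?_, fun i => ?_⟩
    · rw [hcoe]; exact hAinv (show (id : Fin n → Fin n) j < id i from hij)
    · have h1 : ((A : Matrix (Fin n) (Fin n) R) * (A : Matrix (Fin n) (Fin n) R)⁻¹) i i = 1 := by
        rw [Matrix.mul_inv_of_invertible]; simp
      rw [diag_mul_of_triangular hA hAinv, hA2, one_mul] at h1
      rw [hcoe, h1]

/-- The group `T*(n,R)` of upper triangular `n × n` matrices over a linearly ordered field `R`
with positive diagonal entries, realised as a subgroup of the units of the matrix ring. -/
def Tstar (n : ℕ) (R : Type*) [Field R] [LinearOrder R] [IsStrictOrderedRing R] : Subgroup (Matrix (Fin n) (Fin n) R)ˣ where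
  carrier := {A | (∀ i j : Fin n, j < i → (A : Matrix (Fin n) (Fin n) R) i j = 0) ∧
    ∀ i : Fin n, 0 < (A : Matrix (Fin n) (Fin n) R) i i}
  one_mem' := by
    refine ⟨fun i j hij => ?_, fun i => ?_⟩
    · simp [Matrix.one_apply, (ne_of_lt hij).symm]
    · simp
  mul_mem' := by
    rintro A B ⟨hA1, hA2⟩ ⟨hB1, hB2⟩
    have hA : (A : Matrix (Fin n) (Fin n) R).BlockTriangular id := fun i j h => hA1 i j h
    have hB : (B : Matrix (Fin n) (Fin n) R).BlockTriangular id := fun i j h => hB1 i j h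
    refine ⟨fun i j hij => ?_, fun i => ?_⟩
    · exact (hA.mul hB) (show (id : Fin n → Fin n) j < id i from hij)
    · rw [Units.val_mul, diag_mul_of_triangular hA hB]
      exact mul_pos (hA2 i) (hB2 i)
  inv_mem' := by
    rintro A ⟨hA1, hA2⟩
    have hA : (A : Matrix (Fin n) (Fin n) R).BlockTriangular id := fun i j h => hA1 i j h
    haveI := A.invertible
    have hAinv : ((A : Matrix (Fin n) (Fin n) R)⁻¹).BlockTriangular id :=
      Matrix.blockTriangular_inv_of_blockTriangular hA
    have hcoe : ((A⁻¹ : (Matrix (Fin n) (Fin n) R)ˣ) : Matrix (Fin n) (Fin n) R)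
        = (A : Matrix (Fin n) (Fin n) R)⁻¹ := Matrix.coe_units_inv A
    refine ⟨fun i j hij => ?_, fun i => ?_⟩
    · rw [hcoe]; exact hAinv (show (id : Fin n → Fin n) j < id i from hij)
    · have h1 : ((A : Matrix (Fin n) (Fin n) R) * (A : Matrix (Fin n) (Fin n) R)⁻¹) i i = 1 := by
        rw [Matrix.mul_inv_of_invertible]; simp
      rw [diag_mul_of_triangular hA hAinv] at h1
      rw [hcoe]
      rcases lt_trichotomy ((A : Matrix (Fin n) (Fin n) R)⁻¹ i i) 0 with h | h | h
      · exact absurd h1 (by nlinarith [hA2 i])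
      · rw [h, mul_zero] at h1; exact absurd h1 zero_ne_one
      · exact h

/-- The last index of `Fin N` (any element of `Fin N` witnesses `0 < N`). -/
def lastOf {N : ℕ} (r : Fin N) : Fin N := ⟨N - 1, Nat.sub_lt r.pos Nat.one_pos⟩

/-- A square matrix `g` (upper triangular, with positive diagonal and bottom-right entry `1`)
is *essentially hyperbolic* if `g ≠ 1` and there is a row index `r` which is not the last row
such that `(g-1)_{r,N} ≠ 0` (where `N` is the last column) and every nonzero entry of `g - 1`
lies either in a row strictly above `r`, or at position `(r, N)`. -/
def EssentiallyHyperbolic {N : ℕ} {R : Type*} [CommRing R]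
    (g : Matrix (Fin N) (Fin N) R) : Prop :=
  g ≠ 1 ∧ ∃ r : Fin N, (r : ℕ) + 1 < N ∧ (g - 1) r (lastOf r) ≠ 0 ∧
    ∀ i j : Fin N, (g - 1) i j ≠ 0 → i < r ∨ (i = r ∧ j = lastOf r)

end Matrices

/-- The group of order-preserving additive automorphisms of a linearly ordered abelian
group `Λ`, as a subgroup of `AddAut Λ`. -/
def orderAddAut (Λ : Type*) [AddCommGroup Λ] [LinearOrder Λ] [IsOrderedAddMonoid Λ] : AddSubgroup (AddAut Λ) where
  carrier := {f | StrictMono f}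
  zero_mem' := strictMono_id
  add_mem' := by
    intro f g hf hg a b hab
    exact hf (hg hab)
  neg_mem' := by
    intro f hf a b hab
    exact hf.lt_iff_lt.1 (by simpa using hab)

/-! `T*(n,ℝ)` acts simply transitively on itself by left multiplication. Factoring `g = u d` with
`u` unipotent upper triangular and `d` positive diagonal identifies `T*(n,ℝ)` with `ℝ^k`, through
the strictly upper entries of `u` and the logarithms of the entries of `d`; order these coordinates
by decreasing distance from the diagonal, the diagonal being most significant. In these
coordinates left multiplication by `g` is affine and triangular, with positive coefficients
`g i i / g j j`, hence order preserving. If `g ≠ 1`, then at and above the most significant nonzero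
coordinate of `g` itself, left multiplication by `g` is the translation by the coordinates of `g`;
so `g` moves every point up or every point down, which makes it rigid and hyperbolic. -/

namespace LexPow

variable {R ι : Type*} [LinearOrder ι] {m : ℕ}

@[simp] theorem zero_apply [AddCommGroup R] (i : Fin m) : (0 : LexPow R m) i = 0 := rfl

@[simp] theorem sub_apply [AddCommGroup R] (x y : LexPow R m) (i : Fin m) :
    (x - y) i = x i - y i := rfl

theorem ext_orderIso (e : ι ≃o Fin m) {x y : LexPow R m} (h : ∀ i, x (e i) = y (e i)) :
    x = y :=
  funext fun j => by simpa using h (e.symm j)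

theorem lt_iff_exists [LinearOrder R] {x y : LexPow R m} :
    x < y ↔ ∃ i, x i < y i ∧ ∀ j, i < j → x j = y j := by
  change (∃ i : Fin m, (∀ j, j < i → x (Fin.rev j) = y (Fin.rev j)) ∧
    x (Fin.rev i) < y (Fin.rev i)) ↔ _
  rw [← Fin.revPerm.exists_congr_right]
  refine exists_congr fun i => ?_
  rw [and_comm, ← Fin.revPerm.forall_congr_right]
  simp only [Fin.revPerm_apply, Fin.rev_rev, Fin.rev_lt_rev]

theorem lt_iff_exists_orderIso [LinearOrder R] (e : ι ≃o Fin m) {x y : LexPow R m} :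
    x < y ↔ ∃ i, x (e i) < y (e i) ∧ ∀ j, i < j → x (e j) = y (e j) := by
  rw [lt_iff_exists, ← e.toEquiv.exists_congr_right]
  simp only [OrderIso.coe_toEquiv, ← e.toEquiv.forall_congr_right, e.lt_iff_lt]

theorem strictMono_of_triangular [Ring R] [LinearOrder R] [IsStrictOrderedRing R]
    (e : ι ≃o Fin m) {T : LexPow R m → LexPow R m} (a : ι → R) (ha : ∀ i, 0 < a i)
    (hT : ∀ x y i, (∀ j, i < j → x (e j) = y (e j)) →
      T x (e i) - T y (e i) = a i * (x (e i) - y (e i))) :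
    StrictMono T := by
  intro x y hxy
  obtain ⟨i, hi, hagree⟩ := (lt_iff_exists_orderIso e).1 hxy
  refine (lt_iff_exists_orderIso e).2 ⟨i, ?_, fun j hij => ?_⟩
  · have := mul_neg_of_pos_of_neg (ha i) (sub_neg.2 hi)
    rwa [← hT x y i hagree, sub_neg] at this
  · have := hT x y j fun l hjl => hagree l (hij.trans hjl)
    rwa [hagree j hij, sub_self, mul_zero, sub_eq_zero] at this

theorem forall_lt_or_forall_gt_of_leading_translation [AddCommGroup R] [LinearOrder R]
    [IsOrderedAddMonoid R] (e : ι ≃o Fin m) {T : LexPow R m → LexPow R m} (d : LexPow R m)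
    (hd : d ≠ 0) (hT : ∀ x i, (∀ j, i < j → d (e j) = 0) → T x (e i) = x (e i) + d (e i)) :
    (∀ x, x < T x) ∨ (∀ x, T x < x) := by
  rcases hd.lt_or_gt with hneg | hpos
  · obtain ⟨i, hi, hzero⟩ := (lt_iff_exists_orderIso e).1 hneg
    simp only [zero_apply] at hi hzero
    refine Or.inr fun x => (lt_iff_exists_orderIso e).2 ⟨i, ?_, fun j hij => ?_⟩
    · rw [hT x i hzero]
      exact add_lt_of_neg_right _ hi
    · rw [hT x j fun l hjl => hzero l (hij.trans hjl), hzero j hij, add_zero]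
  · obtain ⟨i, hi, hzero⟩ := (lt_iff_exists_orderIso e).1 hpos
    simp only [zero_apply] at hi hzero
    replace hzero := fun j hij => (hzero j hij).symm
    refine Or.inl fun x => (lt_iff_exists_orderIso e).2 ⟨i, ?_, fun j hij => ?_⟩
    · rw [hT x i hzero]
      exact lt_add_of_pos_right _ hi
    · rw [hT x j fun l hjl => hzero l (hij.trans hjl), hzero j hij, add_zero]

end LexPow

namespace OPAffineAut

variable {Λ : Type*} [AddCommGroup Λ] [LinearOrder Λ] [IsOrderedAddMonoid Λ]

def ofStrictMono (f : Λ ≃ Λ) (hf : StrictMono f)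
    (haffine : ∀ x y, f x - f y = f (x - y) - f 0) : OPAffineAut Λ where
  toEquiv := f
  strictMono' := hf
  dilation :=
    { toFun := fun v => f v - f 0
      invFun := fun w => f.symm (w + f 0)
      left_inv := fun v => by simp
      right_inv := fun w => by simp
      map_add' := fun u v => by
        have := haffine (u + v) v
        rw [add_sub_cancel_right] at this
        rw [← this, sub_add_sub_cancel] }
  dilation_strictMono := fun _ _ h => sub_lt_sub_right (hf h) _
  affine := haffine

theorem rigid_hyperbolic_of_forall_lt_or_forall_gt (f : OPAffineAut Λ)
    (h : (∀ x, x < f x) ∨ (∀ x, f x < x)) : f.Rigid ∧ f.Hyperbolic := by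
  have hinv : ∀ x, f⁻¹ x = f.toEquiv.symm x := fun _ => rfl
  have hinv_down : (∀ x, x < f x) → ∀ x, f⁻¹ x < x := fun hup x => by
    simpa [hinv] using hup (f⁻¹ x)
  have hinv_up : (∀ x, f x < x) → ∀ x, x < f⁻¹ x := fun hdown x => by
    simpa [hinv] using hdown (f⁻¹ x)
  refine ⟨?_, fun x => ?_⟩
  · rintro ε (rfl | rfl) ⟨x, hx⟩ y
    · rw [zpow_one] at hx ⊢
      exact h.resolve_right (fun hdown => (hdown x).not_gt hx) y
    · rw [zpow_neg_one] at hx ⊢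
      rcases h with hup | hdown
      · exact absurd hx (hinv_down hup x).not_gt
      · exact hinv_up hdown y
  · rcases h with hup | hdown
    · exact (hup x).ne'
    · exact (hdown x).ne

end OPAffineAut

@[ext]
structure UpperIndex (n : ℕ) where
  row : Fin n
  col : Fin n
  row_le_col : row ≤ col

namespace UpperIndex

variable {n : ℕ}

def equivSigmaIic : UpperIndex n ≃ Σ j : Fin n, Set.Iic j where
  toFun p := ⟨p.col, p.row, p.row_le_col⟩
  invFun s := ⟨s.2, s.1, s.2.2⟩
  left_inv _ := rfl
  right_inv _ := rfl

instance : Fintype (UpperIndex n) := Fintype.ofEquiv _ equivSigmaIic.symm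

theorem card_eq : Fintype.card (UpperIndex n) = n * (n - 1) / 2 + n := by
  rw [Fintype.card_congr equivSigmaIic, Fintype.card_sigma]
  simp only [← Set.toFinset_card, Set.toFinset_Iic, Fin.card_Iic]
  rw [Fin.sum_univ_eq_sum_range (· + 1), Finset.sum_add_distrib, Finset.sum_range_id,
    Finset.sum_const, Finset.card_range, smul_eq_mul, mul_one]

/-- The width `col - row` of an entry is the distance from the diagonal. Entries are ordered by
decreasing width, then by row: the diagonal comes last. -/
def key (p : UpperIndex n) : ℕᵒᵈ ×ₗ Fin n :=
  toLex (OrderDual.toDual ((p.col : ℕ) - p.row), p.row)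

theorem key_injective : Function.Injective (key (n := n)) := by
  intro p q h
  simp only [key, toLex_inj, Prod.mk.injEq, OrderDual.toDual_inj] at h
  have := p.row_le_col
  have := q.row_le_col
  ext <;> omega

instance : LinearOrder (UpperIndex n) := LinearOrder.lift' key key_injective

theorem mk_lt_mk_of_width_lt {i j k l : Fin n} (hij : i ≤ j) (hkl : k ≤ l)
    (h : (l : ℕ) - k < j - i) : (⟨i, j, hij⟩ : UpperIndex n) < ⟨k, l, hkl⟩ :=
  Prod.Lex.toLex_lt_toLex.2 (Or.inl h)

def orderIsoFin (n : ℕ) : UpperIndex n ≃o Fin (n * (n - 1) / 2 + n) :=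
  (Fintype.orderIsoFinOfCardEq _ card_eq).symm

end UpperIndex

noncomputable section

namespace TstarAction

open UpperIndex

variable {n : ℕ}

abbrev Coords (n : ℕ) : Type := LexPow ℝ (n * (n - 1) / 2 + n)

def mat (g : Tstar n ℝ) : Matrix (Fin n) (Fin n) ℝ := (g : (Matrix (Fin n) (Fin n) ℝ)ˣ)

theorem mat_mul (g h : Tstar n ℝ) : mat (g * h) = mat g * mat h := rfl

theorem mat_one : mat (1 : Tstar n ℝ) = 1 := rfl

theorem mat_injective : Function.Injective (mat (n := n)) :=
  fun _ _ h => Subtype.ext (Units.ext h)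

theorem mat_isUpperTriangular (g : Tstar n ℝ) : (mat g).IsUpperTriangular :=
  fun i j h => g.2.1 i j h

theorem mat_diag_pos (g : Tstar n ℝ) (i : Fin n) : 0 < mat g i i := g.2.2 i

def diagCoord (x : Coords n) (j : Fin n) : ℝ := x (orderIsoFin n ⟨j, j, le_rfl⟩)

def unipotent (x : Coords n) : Matrix (Fin n) (Fin n) ℝ := fun i j =>
  if h : i < j then x (orderIsoFin n ⟨i, j, h.le⟩) else if i = j then 1 else 0

theorem unipotent_of_lt (x : Coords n) {i j : Fin n} (h : i < j) :
    unipotent x i j = x (orderIsoFin n ⟨i, j, h.le⟩) := dif_pos h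

theorem unipotent_self (x : Coords n) (i : Fin n) : unipotent x i i = 1 := by
  simp [unipotent]

theorem unipotent_of_gt (x : Coords n) {i j : Fin n} (h : j < i) : unipotent x i j = 0 := by
  simp [unipotent, h.not_gt, h.ne']

theorem unipotent_isUpperTriangular (x : Coords n) : (unipotent x).IsUpperTriangular :=
  fun _ _ h => unipotent_of_gt x h

theorem unipotent_sub_unipotent (x y : Coords n) :
    unipotent x - unipotent y = unipotent (x - y) - unipotent 0 := by
  ext i j
  simp only [Matrix.sub_apply, unipotent]
  split_ifs <;> simp

def toMatrix (x : Coords n) : Matrix (Fin n) (Fin n) ℝ :=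
  unipotent x * Matrix.diagonal fun j => Real.exp (diagCoord x j)

theorem mul_toMatrix_apply (A : Matrix (Fin n) (Fin n) ℝ) (x : Coords n) (i j : Fin n) :
    (A * toMatrix x) i j = (A * unipotent x) i j * Real.exp (diagCoord x j) := by
  rw [toMatrix, ← Matrix.mul_assoc, Matrix.mul_diagonal]

theorem mul_unipotent_self (A : Matrix (Fin n) (Fin n) ℝ) (hA : A.IsUpperTriangular)
    (x : Coords n) (j : Fin n) : (A * unipotent x) j j = A j j := by
  rw [diag_mul_of_triangular hA (unipotent_isUpperTriangular x), unipotent_self, mul_one]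

theorem toMatrix_apply (x : Coords n) (i j : Fin n) :
    toMatrix x i j = unipotent x i j * Real.exp (diagCoord x j) := by
  simpa using mul_toMatrix_apply 1 x i j

theorem isUnit_toMatrix (x : Coords n) : IsUnit (toMatrix x) := by
  have htri : (toMatrix x).IsUpperTriangular := fun i j (h : j < i) => by
    rw [toMatrix_apply, unipotent_of_gt x h, zero_mul]
  rw [Matrix.isUnit_iff_isUnit_det, Matrix.det_of_isUpperTriangular htri]
  refine (Finset.prod_pos fun j _ => ?_).ne'.isUnit
  rw [toMatrix_apply, unipotent_self, one_mul]
  exact Real.exp_pos _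

def ofCoords (x : Coords n) : Tstar n ℝ :=
  ⟨(isUnit_toMatrix x).unit, fun i j h => by
    simp [toMatrix_apply, unipotent_of_gt x h], fun i => by
    simp [toMatrix_apply, unipotent_self, Real.exp_pos]⟩

def chartEntry (A : Matrix (Fin n) (Fin n) ℝ) (p : UpperIndex n) : ℝ :=
  if p.row = p.col then Real.log (A p.col p.col) else A p.row p.col / A p.col p.col

def toCoords (g : Tstar n ℝ) : Coords n :=
  LexPow.of fun q => chartEntry (mat g) ((orderIsoFin n).symm q)

theorem toCoords_apply (g : Tstar n ℝ) (p : UpperIndex n) :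
    toCoords g (orderIsoFin n p) = chartEntry (mat g) p :=
  congrArg (chartEntry (mat g)) ((orderIsoFin n).symm_apply_apply p)

theorem chartEntry_toMatrix (x : Coords n) (p : UpperIndex n) :
    chartEntry (toMatrix x) p = x (orderIsoFin n p) := by
  obtain ⟨i, j, hij⟩ := p
  rcases hij.lt_or_eq with h | rfl
  · simp [chartEntry, h.ne, toMatrix_apply, unipotent_of_lt x h, unipotent_self]
  · simp [chartEntry, toMatrix_apply, unipotent_self, diagCoord]

theorem toMatrix_toCoords (g : Tstar n ℝ) : toMatrix (toCoords g) = mat g := by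
  ext i j
  have hjj : Real.exp (diagCoord (toCoords g) j) = mat g j j := by
    rw [diagCoord, toCoords_apply, chartEntry, if_pos rfl, Real.exp_log (mat_diag_pos g j)]
  rw [toMatrix_apply, hjj]
  rcases lt_trichotomy i j with h | rfl | h
  · rw [unipotent_of_lt _ h, toCoords_apply, chartEntry, if_neg h.ne,
      div_mul_cancel₀ _ (mat_diag_pos g j).ne']
  · rw [unipotent_self, one_mul]
  · rw [unipotent_of_gt _ h, zero_mul, mat_isUpperTriangular g h]

def chart : Tstar n ℝ ≃ Coords n where
  toFun := toCoords
  invFun := ofCoords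
  left_inv g := mat_injective (toMatrix_toCoords g)
  right_inv x := LexPow.ext_orderIso (orderIsoFin n) fun p => by
    rw [toCoords_apply]
    exact chartEntry_toMatrix x p

theorem mat_chart_symm (x : Coords n) : mat (chart.symm x) = toMatrix x := rfl

theorem chart_apply (g : Tstar n ℝ) (p : UpperIndex n) :
    chart g (orderIsoFin n p) = chartEntry (mat g) p :=
  toCoords_apply g p

theorem chart_one : chart (1 : Tstar n ℝ) = 0 :=
  LexPow.ext_orderIso (orderIsoFin n) fun p => by
    simp [chart_apply, chartEntry, mat_one, Matrix.one_apply]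

theorem chart_mul_symm_apply_diag (g : Tstar n ℝ) (x : Coords n) (j : Fin n) :
    chart (g * chart.symm x) (orderIsoFin n ⟨j, j, le_rfl⟩) =
      x (orderIsoFin n ⟨j, j, le_rfl⟩) + Real.log (mat g j j) := by
  rw [chart_apply, chartEntry, if_pos rfl, mat_mul, mat_chart_symm, mul_toMatrix_apply,
    mul_unipotent_self _ (mat_isUpperTriangular g), Real.log_mul (mat_diag_pos g j).ne'
    (Real.exp_pos _).ne', Real.log_exp, diagCoord, add_comm]

theorem chart_mul_symm_apply_of_lt (g : Tstar n ℝ) (x : Coords n) {i j : Fin n} (h : i < j) :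
    chart (g * chart.symm x) (orderIsoFin n ⟨i, j, h.le⟩) =
      (mat g * unipotent x) i j / mat g j j := by
  rw [chart_apply, chartEntry, if_neg h.ne, mat_mul, mat_chart_symm, mul_toMatrix_apply,
    mul_toMatrix_apply, mul_unipotent_self _ (mat_isUpperTriangular g),
    mul_div_mul_right _ _ (Real.exp_pos _).ne']

theorem chart_mul_symm_sub (g : Tstar n ℝ) (x y : Coords n) :
    chart (g * chart.symm x) - chart (g * chart.symm y) =
      chart (g * chart.symm (x - y)) - chart (g * chart.symm 0) := by
  refine LexPow.ext_orderIso (orderIsoFin n) fun ⟨i, j, hij⟩ => ?_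
  simp only [LexPow.sub_apply]
  rcases hij.lt_or_eq with h | rfl
  · simp only [chart_mul_symm_apply_of_lt g _ h, ← sub_div, ← Matrix.sub_apply, ← Matrix.mul_sub]
    rw [unipotent_sub_unipotent]
  · simp only [chart_mul_symm_apply_diag, LexPow.sub_apply, LexPow.zero_apply]
    ring

/-- The entries of column `j` below row `i` lie closer to the diagonal than `(i, j)`, so they are
coordinates of higher rank, where `x` and `y` agree. -/
theorem mul_unipotent_sub_apply_of_agree (g : Tstar n ℝ) {x y : Coords n} {i j : Fin n}
    (h : i < j) (hagree : ∀ q, ⟨i, j, h.le⟩ < q → x (orderIsoFin n q) = y (orderIsoFin n q)) :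
    (mat g * (unipotent x - unipotent y)) i j =
      mat g i i * (x (orderIsoFin n ⟨i, j, h.le⟩) - y (orderIsoFin n ⟨i, j, h.le⟩)) := by
  rw [Matrix.mul_apply, Finset.sum_eq_single i, Matrix.sub_apply, unipotent_of_lt x h,
    unipotent_of_lt y h]
  · intro l _ hli
    rcases hli.lt_or_gt with hl | hl
    · rw [mat_isUpperTriangular g hl, zero_mul]
    rcases lt_trichotomy l j with hlj | rfl | hlj
    · have hq : (⟨i, j, h.le⟩ : UpperIndex n) < ⟨l, j, hlj.le⟩ := mk_lt_mk_of_width_lt _ _ (by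
        simp only [Fin.lt_def] at hl hlj; omega)
      rw [Matrix.sub_apply, unipotent_of_lt x hlj, unipotent_of_lt y hlj, hagree _ hq, sub_self,
        mul_zero]
    · rw [Matrix.sub_apply, unipotent_self, unipotent_self, sub_self, mul_zero]
    · rw [Matrix.sub_apply, unipotent_of_gt x hlj, unipotent_of_gt y hlj, sub_self, mul_zero]
  · exact fun hi => absurd (Finset.mem_univ i) hi

theorem strictMono_chart_mul_symm (g : Tstar n ℝ) :
    StrictMono fun x => chart (g * chart.symm x) := by
  refine LexPow.strictMono_of_triangular (orderIsoFin n)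
    (fun p => mat g p.row p.row / mat g p.col p.col)
    (fun p => div_pos (mat_diag_pos g _) (mat_diag_pos g _)) fun x y ⟨i, j, hij⟩ hagree => ?_
  rcases hij.lt_or_eq with h | rfl
  · rw [chart_mul_symm_apply_of_lt g x h, chart_mul_symm_apply_of_lt g y h, ← sub_div,
      ← Matrix.sub_apply, ← Matrix.mul_sub, mul_unipotent_sub_apply_of_agree g h hagree]
    ring
  · rw [chart_mul_symm_apply_diag, chart_mul_symm_apply_diag,
      div_self (mat_diag_pos g _).ne']
    ring

/-- If the chart of `g` vanishes above an off-diagonal `(i, j)`, then all diagonal entries of `g`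
are `1` and the entries `g i l` with `i < l < j` vanish, so at `(i, j)` left multiplication by `g`
is the translation by `g i j`. -/
theorem chart_mul_symm_apply_of_chart_eq_zero (g : Tstar n ℝ) (x : Coords n) (p : UpperIndex n)
    (hzero : ∀ q, p < q → chart g (orderIsoFin n q) = 0) :
    chart (g * chart.symm x) (orderIsoFin n p) =
      x (orderIsoFin n p) + chart g (orderIsoFin n p) := by
  obtain ⟨i, j, hij⟩ := p
  rcases hij.lt_or_eq.symm with rfl | h
  · rw [chart_mul_symm_apply_diag, chart_apply, chartEntry, if_pos rfl]
  have hdiag : ∀ l, mat g l l = 1 := fun l => by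
    have := hzero ⟨l, l, le_rfl⟩
      (mk_lt_mk_of_width_lt _ _ (by simp only [Fin.lt_def] at h; omega))
    rw [chart_apply, chartEntry, if_pos rfl] at this
    exact Real.eq_one_of_pos_of_log_eq_zero (mat_diag_pos g l) this
  have hrow : ∀ l, i < l → l < j → mat g i l = 0 := fun l hil hlj => by
    have := hzero ⟨i, l, hil.le⟩
      (mk_lt_mk_of_width_lt _ _ (by simp only [Fin.lt_def] at hil hlj; omega))
    rwa [chart_apply, chartEntry, if_neg hil.ne, hdiag, div_one] at this
  rw [chart_mul_symm_apply_of_lt g x h, chart_apply, chartEntry, if_neg h.ne, hdiag, div_one,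
    div_one, Matrix.mul_apply, Fintype.sum_eq_add i j h.ne, hdiag, one_mul, unipotent_of_lt x h,
    unipotent_self, mul_one]
  rintro l ⟨hli, hlj⟩
  rcases hli.lt_or_gt with hl | hil
  · rw [mat_isUpperTriangular g hl, zero_mul]
  rcases hlj.lt_or_gt with hlj | hjl
  · rw [hrow l hil hlj, zero_mul]
  · rw [unipotent_of_gt x hjl, mul_zero]

def leftMulAction : Tstar n ℝ →* OPAffineAut (Coords n) :=
  MonoidHom.mk'
    (fun g => OPAffineAut.ofStrictMono (chart.permCongr (Equiv.mulLeft g))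
      (strictMono_chart_mul_symm g) (chart_mul_symm_sub g))
    fun g h => OPAffineAut.ext' fun x => by
      change chart (g * h * chart.symm x) = chart (g * chart.symm (chart (h * chart.symm x)))
      rw [Equiv.symm_apply_apply, mul_assoc]

theorem leftMulAction_apply (g : Tstar n ℝ) (x : Coords n) :
    leftMulAction g x = chart (g * chart.symm x) := rfl

theorem forall_lt_or_forall_gt_leftMulAction {g : Tstar n ℝ} (hg : g ≠ 1) :
    (∀ x, x < leftMulAction g x) ∨ (∀ x, leftMulAction g x < x) := by
  have hchart : chart g ≠ 0 := fun h => hg (chart.injective (h.trans chart_one.symm))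
  simp only [leftMulAction_apply]
  exact LexPow.forall_lt_or_forall_gt_of_leading_translation (orderIsoFin n) (chart g) hchart
    (chart_mul_symm_apply_of_chart_eq_zero g)

end TstarAction

end

/-- The group `T*(n,ℝ)` admits an essentially free orientation-preserving
affine action on `ℝ^k_lex` with `k = n(n-1)/2 + n`. -/
theorem Tstar_hasEssentiallyFreeAffineAction (n : ℕ) :
    ∃ ρ : Tstar n ℝ →* OPAffineAut (LexPow ℝ (n * (n - 1) / 2 + n)),
      AffineActionEssentiallyFree ρ :=
  ⟨TstarAction.leftMulAction, fun _ hg => OPAffineAut.rigid_hyperbolic_of_forall_lt_or_forall_gt _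
    (TstarAction.forall_lt_or_forall_gt_leftMulAction hg)⟩
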